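/- arXiv:1801.05536 — 3 statements merged into one kernel-verified Lean document; each statement's English description precedes it below -/
import Mathlib

section
/- Let G be a nontrivial finite solvable group with derived length d such that Ω(|G|) ≤ Ω(|H|) for every finite solvable group H with derived length d (i.e., G has minimal composition length among solvable groups of derived length d). Then G has a unique minimal normal subgroup, and this subgroup is an elementary abelian p-group for some prime p. -/
/-- `Omega n` is the number of prime factors of `n` counted with multiplicity,
usually denoted `Ω(n)`.  For a finite solvable group `G`, `Omega (Nat.card G)`
is the composition length of `G`. -/
def Omega (n : ℕ) : ℕ := n.primeFactorsList.length

/-- `DerivedLengthEq G d` says that the derived (solvable) length of `G` is exactly `d`: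
the `d`-th term of the derived series is trivial and no earlier term is trivial. -/
def DerivedLengthEq (G : Type*) [Group G] (d : ℕ) : Prop :=
  derivedSeries G d = ⊥ ∧ ∀ k < d, derivedSeries G k ≠ ⊥

/-- `N` is a minimal normal subgroup of `G`: it is a nontrivial normal subgroup and the
only normal subgroups of `G` contained in it are `⊥` and `N` itself. -/
def IsMinimalNormal (G : Type*) [Group G] (N : Subgroup G) : Prop :=
  N.Normal ∧ N ≠ ⊥ ∧ ∀ M : Subgroup G, M.Normal → M ≤ N → M = ⊥ ∨ M = N

/-!
Let `A` be the last nontrivial term `G⁽ᵈ⁻¹⁾` of the derived series; it is abelian.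
If a nontrivial normal subgroup `M` did not contain `A`, then `G ⧸ M` would still have
derived length `d` but strictly smaller composition length, contradicting minimality.
So `A` lies in every nontrivial normal subgroup and is therefore the unique minimal normal
subgroup. For a prime `p` dividing `|A|`, the elements of `A` of order dividing `p` form a
nontrivial normal subgroup (by Cauchy and commutativity), which by minimality is all of `A`.
-/

theorem Omega_card_quotient_lt {G : Type*} [Group G] [Finite G] {M : Subgroup G}
    (hM : M ≠ ⊥) : Omega (Nat.card (G ⧸ M)) < Omega (Nat.card G) := by
  have hQ : Nat.card (G ⧸ M) ≠ 0 := Nat.card_pos.ne'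
  have hM0 : Nat.card M ≠ 0 := Nat.card_pos.ne'
  have hM1 : 1 < Nat.card M := (Subgroup.one_lt_card_iff_ne_bot M).mpr hM
  simp only [Omega, ← ArithmeticFunction.cardFactors_apply,
    M.card_eq_card_quotient_mul_card_subgroup, ArithmeticFunction.cardFactors_mul hQ hM0]
  have := ArithmeticFunction.cardFactors_pos_iff_one_lt.mpr hM1
  omega

section DerivedLength

variable {G : Type*} [Group G]

theorem commute_of_mem_derivedSeries {n : ℕ} (h : derivedSeries G (n + 1) = ⊥) {x y : G}
    (hx : x ∈ derivedSeries G n) (hy : y ∈ derivedSeries G n) : x * y = y * x := by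
  rw [derivedSeries_succ] at h
  open scoped commutatorElement in
  have hxy : ⁅x, y⁆ ∈ (⊥ : Subgroup G) := h ▸ Subgroup.commutator_mem_commutator hx hy
  exact commutatorElement_eq_one_iff_mul_comm.mp (Subgroup.mem_bot.mp hxy)

namespace DerivedLengthEq

variable {d : ℕ}

theorem isSolvable (hd : DerivedLengthEq G d) : Group.IsSolvable G :=
  ⟨⟨d, hd.1⟩⟩

theorem pos [Nontrivial G] (hd : DerivedLengthEq G d) : 0 < d := by
  refine Nat.pos_of_ne_zero fun h0 => bot_ne_top (α := Subgroup G) ?_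
  rw [← hd.1, h0, derivedSeries_zero]

theorem quotient (hd : DerivedLengthEq G d) {M : Subgroup G} [M.Normal]
    (hM : ¬ derivedSeries G (d - 1) ≤ M) : DerivedLengthEq (G ⧸ M) d := by
  have hmap := map_derivedSeries_eq (QuotientGroup.mk'_surjective M)
  refine ⟨by rw [← hmap, hd.1, Subgroup.map_bot], fun k hk hbot => hM ?_⟩
  have hpred : derivedSeries (G ⧸ M) (d - 1) = ⊥ :=
    le_bot_iff.mp (hbot ▸ derivedSeries_antitone _ (by omega))
  rwa [← hmap, Subgroup.map_eq_bot_iff, QuotientGroup.ker_mk'] at hpred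

end DerivedLengthEq

end DerivedLength

theorem derivedSeries_pred_le_of_minimal {G : Type} [Group G] [Finite G] {d : ℕ}
    (hd : DerivedLengthEq G d)
    (hmin : ∀ (H : Type) [Group H] [Finite H], Group.IsSolvable H → DerivedLengthEq H d →
      Omega (Nat.card G) ≤ Omega (Nat.card H))
    {M : Subgroup G} [M.Normal] (hM : M ≠ ⊥) : derivedSeries G (d - 1) ≤ M := by
  by_contra hle
  have hQ := hd.quotient hle
  exact (hmin (G ⧸ M) hQ.isSolvable hQ).not_gt (Omega_card_quotient_lt hM)

section MinimalNormal

variable {G : Type*} [Group G]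

theorem isMinimalNormal_iff_eq_of_forall_le {A : Subgroup G} [A.Normal] (hA : A ≠ ⊥)
    (hle : ∀ M : Subgroup G, M.Normal → M ≠ ⊥ → A ≤ M) {N : Subgroup G} :
    IsMinimalNormal G N ↔ N = A := by
  constructor
  · rintro ⟨hN, hN_ne, hN_min⟩
    exact (hN_min A ‹_› (hle N hN hN_ne)).resolve_left hA |>.symm
  · rintro rfl
    exact ⟨‹_›, hA, fun M hM hMN => or_iff_not_imp_left.mpr fun hM_ne =>
      le_antisymm hMN (hle M hM hM_ne)⟩

def Subgroup.torsionByOfComm (N : Subgroup G) (hN : ∀ x ∈ N, ∀ y ∈ N, x * y = y * x)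
    (n : ℕ) : Subgroup G where
  carrier := {g | g ∈ N ∧ g ^ n = 1}
  one_mem' := ⟨N.one_mem, one_pow n⟩
  mul_mem' := by
    rintro a b ⟨haN, ha⟩ ⟨hbN, hb⟩
    refine ⟨N.mul_mem haN hbN, ?_⟩
    rw [Commute.mul_pow (hN a haN b hbN), ha, hb, one_mul]
  inv_mem' := by
    rintro a ⟨haN, ha⟩
    exact ⟨N.inv_mem haN, by rw [inv_pow, ha, inv_one]⟩

theorem Subgroup.torsionByOfComm_normal {N : Subgroup G} [N.Normal]
    (hN : ∀ x ∈ N, ∀ y ∈ N, x * y = y * x) (n : ℕ) : (N.torsionByOfComm hN n).Normal where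
  conj_mem a ha g := ⟨‹N.Normal›.conj_mem a ha.1 g, by rw [conj_pow, ha.2, mul_one, mul_inv_cancel]⟩

theorem IsMinimalNormal.exists_prime_pow_eq_one [Finite G] {N : Subgroup G}
    (hN : IsMinimalNormal G N) (hcomm : ∀ x ∈ N, ∀ y ∈ N, x * y = y * x) :
    ∃ p : ℕ, p.Prime ∧ ∀ x ∈ N, x ^ p = 1 := by
  obtain ⟨hN_normal, hN_ne, hN_min⟩ := hN
  set p := (Nat.card N).minFac
  have hp : p.Prime := Nat.minFac_prime ((Subgroup.one_lt_card_iff_ne_bot N).mpr hN_ne).ne'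
  have : Fact p.Prime := ⟨hp⟩
  obtain ⟨x, hx⟩ := exists_prime_orderOf_dvd_card' (G := N) p (Nat.minFac_dvd _)
  have hx_mem : (x : G) ∈ N.torsionByOfComm hcomm p := by
    refine ⟨x.2, ?_⟩
    rw [← hx, ← Subgroup.orderOf_coe, pow_orderOf_eq_one]
  have hx_ne : (x : G) ≠ 1 := by
    intro h1
    rw [← Subgroup.orderOf_coe, h1, orderOf_one] at hx
    exact hp.ne_one hx.symm
  have htors := (hN_min _ (Subgroup.torsionByOfComm_normal hcomm p) fun _ hg => hg.1).resolve_left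
    fun hbot => hx_ne (Subgroup.mem_bot.mp (hbot ▸ hx_mem))
  exact ⟨p, hp, fun g hg => (htors.ge hg).2⟩

end MinimalNormal

theorem unique_minimal_normal_of_minimal_general (G : Type) [Group G] [Finite G] [Nontrivial G]
    (d : ℕ) (hd : DerivedLengthEq G d)
    (hmin : ∀ (H : Type) [Group H] [Finite H], IsSolvable H → DerivedLengthEq H d →
      Omega (Nat.card G) ≤ Omega (Nat.card H)) :
    (∃! N : Subgroup G, IsMinimalNormal G N) ∧
      ∀ N : Subgroup G, IsMinimalNormal G N →
        ∃ p : ℕ, p.Prime ∧ (∀ x ∈ N, x ^ p = 1) ∧ ∀ x ∈ N, ∀ y ∈ N, x * y = y * x := by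
  have hd_pos := hd.pos
  set A := derivedSeries G (d - 1)
  have hA_ne : A ≠ ⊥ := hd.2 _ (by omega)
  have hA_le : ∀ M : Subgroup G, M.Normal → M ≠ ⊥ → A ≤ M := fun M _ hM =>
    derivedSeries_pred_le_of_minimal hd hmin hM
  have hA_comm : ∀ x ∈ A, ∀ y ∈ A, x * y = y * x := fun x hx y hy =>
    commute_of_mem_derivedSeries (by rw [Nat.sub_add_cancel hd_pos]; exact hd.1) hx hy
  have hiff := fun N => isMinimalNormal_iff_eq_of_forall_le hA_ne hA_le (N := N)
  refine ⟨⟨A, (hiff A).2 rfl, fun N hN => (hiff N).1 hN⟩, fun N hN => ?_⟩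
  obtain rfl := (hiff N).1 hN
  obtain ⟨p, hp, hpow⟩ := hN.exists_prime_pow_eq_one hA_comm
  exact ⟨p, hp, hpow, hA_comm⟩

/-- If `G` is a nontrivial finite solvable group of derived length `d` with minimal
composition length among all finite solvable groups of derived length `d`, then `G` has a
unique minimal normal subgroup, and it is an elementary abelian `p`-group for some
prime `p` (a nontrivial abelian group of exponent `p`). -/
theorem unique_minimal_normal_of_minimal (G : Type) [Group G] [Finite G] [Nontrivial G]
    (hG : IsSolvable G) (d : ℕ) (hd : DerivedLengthEq G d)
    (hmin : ∀ (H : Type) [Group H] [Finite H], IsSolvable H → DerivedLengthEq H d →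
      Omega (Nat.card G) ≤ Omega (Nat.card H)) :
    (∃! N : Subgroup G, IsMinimalNormal G N) ∧
      ∀ N : Subgroup G, IsMinimalNormal G N →
        ∃ p : ℕ, p.Prime ∧ (∀ x ∈ N, x ^ p = 1) ∧ ∀ x ∈ N, ∀ y ∈ N, x * y = y * x :=
  unique_minimal_normal_of_minimal_general G d hd hmin
end

section
/- Let p be a prime and let G be a finite p-group with derived length d > 1. Then Ω(|G|) ≥ 2^(d−1) + 1; that is, if |G| = p^c then c ≥ 2^(d−1) + 1. -/
open Subgroup ArithmeticFunction
open scoped ArithmeticFunction.Omega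

theorem Omega_eq_cardFactors (n : ℕ) : Omega n = Ω n :=
  cardFactors_apply.symm

section LowerCentralSeries

variable {G : Type*} [Group G]

theorem commutator_commutator_le_of_rotate {A B C N : Subgroup G} [N.Normal]
    (h1 : ⁅⁅B, C⁆, A⁆ ≤ N) (h2 : ⁅⁅C, A⁆, B⁆ ≤ N) : ⁅⁅A, B⁆, C⁆ ≤ N := by
  have in_kernel : ∀ {X Y Z : Subgroup G}, ⁅⁅X, Y⁆, Z⁆ ≤ N ↔
      ⁅⁅X.map (QuotientGroup.mk' N), Y.map (QuotientGroup.mk' N)⁆,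
        Z.map (QuotientGroup.mk' N)⁆ = ⊥ := by
    intro X Y Z
    rw [← map_commutator, ← map_commutator, Subgroup.map_eq_bot_iff,
      QuotientGroup.ker_mk']
  rw [in_kernel]
  exact commutator_commutator_eq_bot_of_rotate (in_kernel.mp h1) (in_kernel.mp h2)

theorem commutator_lowerCentralSeries_le (i j : ℕ) :
    ⁅(⊤ : Subgroup G).lowerCentralSeries i, (⊤ : Subgroup G).lowerCentralSeries j⁆ ≤
      (⊤ : Subgroup G).lowerCentralSeries (i + j + 1) := by
  induction j generalizing i with
  | zero => rfl
  | succ j ih =>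
    rw [Subgroup.lowerCentralSeries_succ, commutator_comm]
    apply commutator_commutator_le_of_rotate
    · rw [commutator_comm ⊤, ← Subgroup.lowerCentralSeries_succ,
        show i + (j + 1) + 1 = i + 1 + j + 1 by omega]
      exact ih (i + 1)
    · exact commutator_mono (ih i) le_rfl

theorem derivedSeries_le_lowerCentralSeries (k : ℕ) :
    derivedSeries G k ≤ (⊤ : Subgroup G).lowerCentralSeries (2 ^ k - 1) := by
  induction k with
  | zero => simp
  | succ k ih =>
    have index_eq : 2 ^ k - 1 + (2 ^ k - 1) + 1 = 2 ^ (k + 1) - 1 := by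
      have := Nat.one_le_two_pow (n := k)
      rw [pow_succ]; omega
    rw [derivedSeries_succ, ← index_eq]
    exact (commutator_mono ih ih).trans (commutator_lowerCentralSeries_le _ _)

theorem two_pow_le_nilpotencyClass [Group.IsNilpotent G] {k : ℕ}
    (hk : derivedSeries G k ≠ ⊥) : 2 ^ k ≤ Group.nilpotencyClass G := by
  by_contra! hlt
  have := Subgroup.lowerCentralSeries_eq_bot_iff_nilpotencyClass_le.mpr (Nat.le_sub_one_of_lt hlt)
  exact hk (le_bot_iff.mp (this ▸ derivedSeries_le_lowerCentralSeries k))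

end LowerCentralSeries

section Finite

variable {G : Type*} [Group G] [Finite G]

theorem isCyclic_of_Omega_card_le_one (h : Omega (Nat.card G) ≤ 1) : IsCyclic G := by
  rw [Omega_eq_cardFactors] at h
  rcases Nat.le_one_iff_eq_zero_or_eq_one.mp h with h0 | h1
  · have : Nat.card G = 1 := (cardFactors_eq_zero_iff_eq_zero_or_one.mp h0).resolve_left
      Nat.card_pos.ne'
    have : Subsingleton G := (Nat.card_eq_one_iff_unique.mp this).1
    infer_instance
  · have : Fact (Nat.card G).Prime := ⟨cardFactors_eq_one_iff_prime.mp h1⟩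
    exact isCyclic_of_prime_card rfl

theorem two_le_Omega_card_quotient_center (hG : ¬ IsMulCommutative G) :
    2 ≤ Omega (Nat.card (G ⧸ center G)) := by
  by_contra! h
  have := isCyclic_of_Omega_card_le_one (Nat.le_of_lt_succ h)
  exact hG (isMulCommutative_of_isCyclic_quotient_center_self G)

theorem Omega_card_quotient_center_lt [Group.IsNilpotent G] [Nontrivial G] :
    Omega (Nat.card (G ⧸ center G)) < Omega (Nat.card G) := by
  have center_pos : 0 < Ω (Nat.card (center G)) := by
    rw [cardFactors_pos_iff_one_lt, one_lt_card_iff_ne_bot]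
    exact Group.IsNilpotent.center_ne_bot G
  rw [Omega_eq_cardFactors, Omega_eq_cardFactors,
    card_eq_card_quotient_mul_card_subgroup (center G),
    cardFactors_mul Nat.card_pos.ne' Nat.card_pos.ne']
  omega

theorem nilpotencyClass_lt_Omega_card [Group.IsNilpotent G] (h : 2 ≤ Group.nilpotencyClass G) :
    Group.nilpotencyClass G < Omega (Nat.card G) := by
  obtain ⟨n, hn⟩ : ∃ n, Group.nilpotencyClass G = n := ⟨_, rfl⟩
  induction n generalizing G with
  | zero => omega
  | succ n ih =>
    have : Nontrivial G := not_subsingleton_iff_nontrivial.mp fun _ => by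
      have := Group.nilpotencyClass_zero_iff_subsingleton.mpr ‹Subsingleton G›
      omega
    have quotient_class : Group.nilpotencyClass (G ⧸ center G) = n := by
      rw [Group.nilpotencyClass_quotient_center, hn, Nat.add_sub_cancel]
    have quotient_lt : n < Omega (Nat.card (G ⧸ center G)) := by
      by_cases hn2 : 2 ≤ n
      · have := ih (G := G ⧸ center G) (by omega) quotient_class
        omega
      · have hG : ¬ IsMulCommutative G := by
          rw [← Group.IsNilpotent.nilpotencyClass_le_one_iff]
          omega
        have := two_le_Omega_card_quotient_center hG
        omega
    have := Omega_card_quotient_center_lt (G := G)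
    omega

end Finite

/-- A finite `p`-group with derived length `d > 1` has composition length at least
`2^(d−1) + 1`; that is, if `|G| = p^c` then `c ≥ 2^(d−1) + 1`. -/
theorem pGroup_comp_length_ge (p : ℕ) (hp : p.Prime) (G : Type*) [Group G] [Finite G]
    (hG : IsPGroup p G) (d : ℕ) (hd : DerivedLengthEq G d) (hd1 : 1 < d) :
    2 ^ (d - 1) + 1 ≤ Omega (Nat.card G) ∧
      ∀ c : ℕ, Nat.card G = p ^ c → 2 ^ (d - 1) + 1 ≤ c := by
  have : Fact p.Prime := ⟨hp⟩
  have : Group.IsNilpotent G := hG.isNilpotent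
  have class_ge : 2 ^ (d - 1) ≤ Group.nilpotencyClass G :=
    two_pow_le_nilpotencyClass (hd.2 (d - 1) (by omega))
  have two_le : 2 ≤ 2 ^ (d - 1) := Nat.le_self_pow (by omega) 2
  have omega_ge : 2 ^ (d - 1) + 1 ≤ Omega (Nat.card G) :=
    class_ge.trans_lt (nilpotencyClass_lt_Omega_card (two_le.trans class_ge))
  refine ⟨omega_ge, fun c hc => ?_⟩
  rwa [hc, Omega_eq_cardFactors, cardFactors_apply_prime_pow hp] at omega_ge
end

section
/- Let d ≥ 1 and let P be a Sylow 2-subgroup of the symmetric group on 2^d letters. Then P has derived length exactly d and order 2^(2^d − 1) (hence composition length 2^d − 1). -/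
open scoped commutatorElement

section DerivedLength

variable {G H : Type*} [Group G] [Group H]

theorem derivedLengthEq_succ_iff {d : ℕ} :
    DerivedLengthEq G (d + 1) ↔ derivedSeries G (d + 1) = ⊥ ∧ derivedSeries G d ≠ ⊥ := by
  refine ⟨fun h ↦ ⟨h.1, h.2 d d.lt_succ_self⟩, fun ⟨hbot, hne⟩ ↦ ⟨hbot, fun k hk hk_bot ↦ hne ?_⟩⟩
  exact le_bot_iff.mp (hk_bot ▸ derivedSeries_antitone G (Nat.le_of_lt_succ hk))

theorem DerivedLengthEq.of_mulEquiv {d : ℕ} (e : G ≃* H) (h : DerivedLengthEq G d) :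
    DerivedLengthEq H d := by
  have hmap (n : ℕ) : (derivedSeries G n).map e.toMonoidHom = derivedSeries H n :=
    map_derivedSeries_eq e.surjective n
  refine ⟨by rw [← hmap, h.1, Subgroup.map_bot], fun k hk hbot ↦ h.2 k hk ?_⟩
  rwa [← hmap, Subgroup.map_eq_bot_iff_of_injective _ e.injective] at hbot

theorem derivedSeries_pi_eq_bot {ι : Type*} {d : ℕ} (h : derivedSeries G d = ⊥) :
    derivedSeries (ι → G) d = ⊥ := by
  refine (Subgroup.eq_bot_iff_forall _).mpr fun x hx ↦ funext fun i ↦ ?_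
  have : Pi.evalMonoidHom (fun _ ↦ G) i x ∈ derivedSeries G d :=
    map_derivedSeries_le_derivedSeries _ d (Subgroup.mem_map_of_mem _ hx)
  rwa [h, Subgroup.mem_bot] at this

theorem Subgroup.commutator_comap_le (f : G →* H) (A B : Subgroup H) :
    ⁅A.comap f, B.comap f⁆ ≤ ⁅A, B⁆.comap f := by
  rw [Subgroup.commutator_le]
  intro a ha b hb
  rw [Subgroup.mem_comap, map_commutatorElement]
  exact Subgroup.commutator_mem_commutator ha hb

end DerivedLength

namespace RegularWreathProduct

variable {D Q : Type*} [Group D] [Group Q]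

def base : (Q → D) →* D ≀ᵣ Q where
  toFun f := ⟨f, 1⟩
  map_one' := rfl
  map_mul' _ _ := by ext <;> simp [mul_def]

theorem base_injective : Function.Injective (base : (Q → D) →* D ≀ᵣ Q) :=
  fun _ _ h ↦ congrArg left h

theorem range_base_eq_ker_rightHom : (base : (Q → D) →* D ≀ᵣ Q).range = rightHom.ker := by
  ext x
  refine ⟨?_, fun hx ↦ ⟨x.left, ?_⟩⟩
  · rintro ⟨f, rfl⟩
    rfl
  · ext <;> simp_all [base]

theorem commutatorElement_base_inl (f : Q → D) (q : Q) :
    ⁅base f, inl q⁆ = base (f * fun x ↦ (f (q⁻¹ * x))⁻¹) := by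
  ext <;> simp [commutatorElement_def, base, mul_def, inv_left, inv_right]

theorem derivedSeries_succ_le_map_base [IsMulCommutative Q] (n : ℕ) :
    derivedSeries (D ≀ᵣ Q) (n + 1) ≤ (derivedSeries (Q → D) n).map base := by
  induction n with
  | zero =>
    rw [derivedSeries_succ, derivedSeries_zero, derivedSeries_zero, ← MonoidHom.range_eq_map,
      range_base_eq_ker_rightHom, Subgroup.commutator_le]
    intro a _ b _
    rw [MonoidHom.mem_ker, map_commutatorElement, commutatorElement_eq_one_iff_commute]
    exact Std.Commutative.comm _ _
  | succ n ih =>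
    rw [derivedSeries_succ _ (n + 1), derivedSeries_succ (Q → D) n, Subgroup.map_commutator]
    exact Subgroup.commutator_mono ih ih

theorem derivedSeries_le_map_comap_derivedSeries_succ [Nontrivial Q] (k : ℕ) :
    derivedSeries D k ≤
      ((derivedSeries (D ≀ᵣ Q) (k + 1)).comap base).map (Pi.evalMonoidHom (fun _ ↦ D) 1) := by
  induction k with
  | zero =>
    classical
    intro g _
    obtain ⟨q, hq⟩ := exists_ne (1 : Q)
    let f : Q → D := Pi.mulSingle 1 g
    refine ⟨f * fun x ↦ (f (q⁻¹ * x))⁻¹, ?_, ?_⟩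
    · rw [SetLike.mem_coe, Subgroup.mem_comap, ← commutatorElement_base_inl]
      exact Subgroup.commutator_mem_commutator (Subgroup.mem_top _) (Subgroup.mem_top _)
    · simp [f, hq]
  | succ k ih =>
    rw [derivedSeries_succ, derivedSeries_succ (D ≀ᵣ Q) (k + 1)]
    calc _ ≤ ⁅_, _⁆ := Subgroup.commutator_mono ih ih
      _ = _ := (Subgroup.map_commutator _ _ _).symm
      _ ≤ _ := Subgroup.map_mono (Subgroup.commutator_comap_le _ _ _)

theorem derivedLengthEq_succ [IsMulCommutative Q] [Nontrivial Q] {d : ℕ}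
    (h : DerivedLengthEq D d) : DerivedLengthEq (D ≀ᵣ Q) (d + 1) := by
  refine derivedLengthEq_succ_iff.mpr ⟨?_, ?_⟩
  · have := derivedSeries_succ_le_map_base (D := D) (Q := Q) d
    rwa [derivedSeries_pi_eq_bot h.1, Subgroup.map_bot, le_bot_iff] at this
  · cases d with
    | zero =>
      obtain ⟨q, hq⟩ := exists_ne (1 : Q)
      intro htop
      have : inl q ∈ derivedSeries (D ≀ᵣ Q) 0 := Subgroup.mem_top _
      rw [htop, Subgroup.mem_bot] at this
      exact hq (congrArg right this)
    | succ k =>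
      intro hbot
      have := derivedSeries_le_map_comap_derivedSeries_succ (D := D) (Q := Q) k
      rw [hbot, MonoidHom.comap_bot, (MonoidHom.ker_eq_bot_iff _).mpr base_injective,
        Subgroup.map_bot, le_bot_iff] at this
      exact h.2 k k.lt_succ_self this

end RegularWreathProduct

theorem derivedLengthEq_iteratedWreathProduct (G : Type*) [Group G] [IsMulCommutative G]
    [Nontrivial G] (n : ℕ) : DerivedLengthEq (IteratedWreathProduct G n) n := by
  induction n with
  | zero => exact ⟨Subsingleton.elim (α := Subgroup PUnit) _ _, nofun⟩
  | succ n ih => exact RegularWreathProduct.derivedLengthEq_succ ih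

theorem sylow_two_perm_derived_length_and_card_general (d : ℕ)
    (P : Sylow 2 (Equiv.Perm (Fin (2 ^ d)))) :
    DerivedLengthEq (P : Subgroup (Equiv.Perm (Fin (2 ^ d)))) d ∧
      Nat.card (P : Subgroup (Equiv.Perm (Fin (2 ^ d)))) = 2 ^ (2 ^ d - 1) := by
  have hC₂ : Nat.card (Multiplicative (ZMod 2)) = 2 := by simp
  let e := Sylow.mulEquivIteratedWreathProduct 2 d (Fin (2 ^ d)) (Nat.card_fin _) _ hC₂ P
  refine ⟨(derivedLengthEq_iteratedWreathProduct _ d).of_mulEquiv e.symm, ?_⟩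
  rw [Nat.card_congr e.toEquiv, IteratedWreathProduct.card, hC₂, Nat.geomSum_eq le_rfl]
  simp

/-- A Sylow `2`-subgroup of the symmetric group on `2^d` letters (`d ≥ 1`) has derived
length exactly `d` and order `2^(2^d − 1)` (hence composition length `2^d − 1`). -/
theorem sylow_two_perm_derived_length_and_card (d : ℕ) (hd : 1 ≤ d)
    (P : Sylow 2 (Equiv.Perm (Fin (2 ^ d)))) :
    DerivedLengthEq (P : Subgroup (Equiv.Perm (Fin (2 ^ d)))) d ∧
      Nat.card (P : Subgroup (Equiv.Perm (Fin (2 ^ d)))) = 2 ^ (2 ^ d - 1) :=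
  sylow_two_perm_derived_length_and_card_general d P
end
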